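/- Let (X, 𝒞) be a concept space with finite VC dimension d ≥ 1, and let d* denote the VC dimension of its dual concept space. Then ⌊log₂ d⌋ ≤ d* (equivalently log₂ d − 1 < d*) and d* < 2^{d+1}. -/
import Mathlib


open Set MeasureTheory Filter

/-- `A` is shattered by the concept class `𝒞`: `{C ∩ A : C ∈ 𝒞} = 2^A`. -/
def Shatters {X : Type*} (𝒞 : Set (Set X)) (A : Set X) : Prop :=
  (fun C => C ∩ A) '' 𝒞 = 𝒫 A

/-- The VC dimension of a concept class: the supremum (in `ℕ∞`) of the cardinalities
of finite shattered subsets. -/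
noncomputable def vcDim {X : Type*} (𝒞 : Set (Set X)) : ℕ∞ :=
  ⨆ (A : Finset X) (_ : Shatters 𝒞 ↑A), (A.card : ℕ∞)
/-- The concept class of the dual concept space of `(X, 𝒞)`: the domain is `𝒞`
and the concepts are the sets `{C ∈ 𝒞 : x ∈ C}` for `x ∈ X`. -/
def dualClass {X : Type*} (𝒞 : Set (Set X)) : Set (Set ↥𝒞) :=
  Set.range fun x : X => {C : ↥𝒞 | x ∈ (C : Set X)}

lemma shatters_iff {X : Type*} (𝒞 : Set (Set X)) (A : Set X) :
    Shatters 𝒞 A ↔ ∀ S ⊆ A, ∃ C ∈ 𝒞, C ∩ A = S := by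
  constructor
  · intro h S hS
    have : S ∈ 𝒫 A := hS
    rw [← h] at this
    obtain ⟨C, hC, hCA⟩ := this
    exact ⟨C, hC, hCA⟩
  · intro h
    apply Set.Subset.antisymm
    · rintro _ ⟨C, _, rfl⟩
      exact Set.inter_subset_right
    · intro S hS
      obtain ⟨C, hC, hCA⟩ := h S hS
      exact ⟨C, hC, hCA⟩

lemma shatters_mono {X : Type*} {𝒞 : Set (Set X)} {A B : Set X}
    (h : Shatters 𝒞 A) (hBA : B ⊆ A) : Shatters 𝒞 B := by
  rw [shatters_iff] at h ⊢
  intro S hS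
  obtain ⟨C, hC, hCA⟩ := h S (hS.trans hBA)
  refine ⟨C, hC, ?_⟩
  rw [show C ∩ B = (C ∩ A) ∩ B by rw [inter_assoc, inter_eq_self_of_subset_right hBA],
    hCA, inter_eq_self_of_subset_left hS]

lemma le_vcDim {X : Type*} {𝒞 : Set (Set X)} {A : Finset X}
    (h : Shatters 𝒞 ↑A) : (A.card : ℕ∞) ≤ vcDim 𝒞 :=
  le_iSup₂ (f := fun (A : Finset X) (_ : Shatters 𝒞 ↑A) => (A.card : ℕ∞)) A h

/-- abstract grid lemma -/
lemma grid_shatters {Y : Type*} [DecidableEq Y] {𝒟 : Set (Set Y)} {k : ℕ}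
    (x : Fin k → Y) (g : (Fin k → Bool) → Set Y)
    (hg : ∀ u, g u ∈ 𝒟) (hmem : ∀ u i, x i ∈ g u ↔ u i = true) :
    ∃ A : Finset Y, Shatters 𝒟 ↑A ∧ A.card = k := by
  have hinj : Function.Injective x := by
    intro i j hij
    by_contra hne
    have := hmem (fun l => decide (l = i)) j
    rw [← hij, hmem (fun l => decide (l = i)) i] at this
    simp at this
    exact hne (this.symm)
  refine ⟨Finset.image x Finset.univ, ?_, by
    rw [Finset.card_image_of_injective _ hinj, Finset.card_univ, Fintype.card_fin]⟩
  rw [shatters_iff]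
  intro S hS
  classical
  refine ⟨g (fun i => decide (x i ∈ S)), hg _, ?_⟩
  ext y
  simp only [Set.mem_inter_iff, Finset.coe_image, Finset.coe_univ, Set.image_univ,
    Set.mem_range]
  constructor
  · rintro ⟨hy, i, rfl⟩
    have := (hmem _ i).mp hy
    simpa using this
  · intro hy
    have hyA := hS hy
    simp only [Finset.coe_image, Finset.coe_univ, Set.image_univ, Set.mem_range] at hyA
    obtain ⟨i, rfl⟩ := hyA
    exact ⟨(hmem _ i).mpr (by simpa using hy), i, rfl⟩

/-- primal shatters 2^k → dual shatters k -/
lemma dual_of_primal {X : Type*} {𝒞 : Set (Set X)} {k : ℕ} {A : Finset X}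
    (h : Shatters 𝒞 ↑A) (hcard : A.card = 2 ^ k) :
    ∃ B : Finset ↥𝒞, Shatters (dualClass 𝒞) ↑B ∧ B.card = k := by
  classical
  have hcardeq : Fintype.card (Fin k → Bool) = Fintype.card ↥(↑A : Set X) := by
    simp [hcard]
  let e := Fintype.equivOfCardEq hcardeq
  set f : (Fin k → Bool) → X := fun u => ((e u : ↥(↑A : Set X)) : X) with hf
  have hfinj : Function.Injective f := fun u v huv =>
    e.injective (Subtype.ext huv)
  have hfA : ∀ u, f u ∈ (↑A : Set X) := fun u => (e u).2
  rw [shatters_iff] at h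
  have hCi : ∀ i : Fin k, ∃ C ∈ 𝒞, C ∩ ↑A = f '' {u | u i = true} := by
    intro i
    exact h _ (by rintro _ ⟨u, _, rfl⟩; exact hfA u)
  choose C hC hCA using hCi
  have key : ∀ u i, f u ∈ C i ↔ u i = true := by
    intro u i
    constructor
    · intro hu
      have : f u ∈ C i ∩ ↑A := ⟨hu, hfA u⟩
      rw [hCA i] at this
      obtain ⟨v, hv, hvu⟩ := this
      exact hfinj hvu ▸ hv
    · intro hu
      have : f u ∈ C i ∩ ↑A := by
        rw [hCA i]; exact ⟨u, hu, rfl⟩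
      exact this.1
  exact grid_shatters (𝒟 := dualClass 𝒞) (fun i => (⟨C i, hC i⟩ : ↥𝒞))
    (fun u => {D : ↥𝒞 | f u ∈ (D : Set X)})
    (fun u => ⟨f u, rfl⟩)
    (fun u i => key u i)

/-- dual shatters 2^k → primal shatters k -/
lemma primal_of_dual {X : Type*} {𝒞 : Set (Set X)} {k : ℕ} {B : Finset ↥𝒞}
    (h : Shatters (dualClass 𝒞) ↑B) (hcard : B.card = 2 ^ k) :
    ∃ A : Finset X, Shatters 𝒞 ↑A ∧ A.card = k := by
  classical
  have hcardeq : Fintype.card (Fin k → Bool) = Fintype.card ↥(↑B : Set ↥𝒞) := by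
    simp [hcard]
  let e := Fintype.equivOfCardEq hcardeq
  set f : (Fin k → Bool) → ↥𝒞 := fun u => ((e u : ↥(↑B : Set ↥𝒞)) : ↥𝒞) with hf
  have hfinj : Function.Injective f := fun u v huv =>
    e.injective (Subtype.ext huv)
  have hfB : ∀ u, f u ∈ (↑B : Set ↥𝒞) := fun u => (e u).2
  rw [shatters_iff] at h
  have hDi : ∀ i : Fin k, ∃ D ∈ dualClass 𝒞, D ∩ ↑B = f '' {u | u i = true} := by
    intro i
    exact h _ (by rintro _ ⟨u, _, rfl⟩; exact hfB u)
  choose D hD hDB using hDi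
  choose x hx using hD
  have key : ∀ u i, x i ∈ (f u : Set X) ↔ u i = true := by
    intro u i
    have hfu : f u ∈ D i ↔ f u ∈ f '' {u | u i = true} := by
      constructor
      · intro hu; rw [← hDB i]; exact ⟨hu, hfB u⟩
      · intro hu; rw [← hDB i] at hu; exact hu.1
    have h2 : f u ∈ D i ↔ x i ∈ (f u : Set X) := by
      rw [← hx i]; rfl
    rw [← h2, hfu]
    constructor
    · rintro ⟨v, hv, hvu⟩; exact hfinj hvu ▸ hv
    · intro hu; exact ⟨u, hu, rfl⟩
  exact grid_shatters (𝒟 := 𝒞) x (fun u => (f u : Set X))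
    (fun u => (f u).2) key

lemma vcDim_attained {X : Type*} {𝒞 : Set (Set X)} {d : ℕ} (hd : 1 ≤ d)
    (hvc : vcDim 𝒞 = (d : ℕ∞)) :
    ∃ A : Finset X, Shatters 𝒞 ↑A ∧ A.card = d := by
  by_contra h
  push_neg at h
  have hle : vcDim 𝒞 ≤ ((d - 1 : ℕ) : ℕ∞) := by
    apply iSup₂_le
    intro A hA
    have h1 : (A.card : ℕ∞) ≤ (d : ℕ∞) := hvc ▸ le_vcDim hA
    have h2 : A.card ≤ d := by exact_mod_cast h1
    have h3 : A.card ≠ d := h A hA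
    exact_mod_cast Nat.le_sub_one_of_lt (lt_of_le_of_ne h2 h3)
  rw [hvc] at hle
  have : d ≤ d - 1 := by exact_mod_cast hle
  omega

/-- Theorem 1.3.8 (Laskowski; Assouad): if `vc(𝒞) = d ≥ 1` then the dual VC dimension
`d*` satisfies `⌊log₂ d⌋ ≤ d*` and `d* < 2^(d+1)`. -/
theorem stmt_4 {X : Type*} (𝒞 : Set (Set X)) (d : ℕ) (hd : 1 ≤ d)
    (hvc : vcDim 𝒞 = (d : ℕ∞)) :
    ((Nat.log 2 d : ℕ) : ℕ∞) ≤ vcDim (dualClass 𝒞) ∧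
      vcDim (dualClass 𝒞) < ((2 ^ (d + 1) : ℕ) : ℕ∞) := by
  constructor
  · -- lower bound
    obtain ⟨A, hA, hAcard⟩ := vcDim_attained hd hvc
    have hpow : 2 ^ Nat.log 2 d ≤ d := Nat.pow_log_le_self 2 (by omega)
    obtain ⟨A', hA'sub, hA'card⟩ :=
      Finset.exists_subset_card_eq (hAcard ▸ hpow : 2 ^ Nat.log 2 d ≤ A.card)
    have hA' : Shatters 𝒞 ↑A' := shatters_mono hA (by exact_mod_cast hA'sub)
    obtain ⟨B, hB, hBcard⟩ := dual_of_primal hA' hA'card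
    exact hBcard ▸ le_vcDim hB
  · -- upper bound
    have hle : vcDim (dualClass 𝒞) ≤ ((2 ^ (d + 1) - 1 : ℕ) : ℕ∞) := by
      apply iSup₂_le
      intro B hB
      by_contra hlt
      push_neg at hlt
      have hcard : 2 ^ (d + 1) ≤ B.card := by
        have : (2 ^ (d + 1) - 1 : ℕ) < B.card := by exact_mod_cast hlt
        omega
      obtain ⟨B', hB'sub, hB'card⟩ := Finset.exists_subset_card_eq hcard
      have hB' : Shatters (dualClass 𝒞) ↑B' :=
        shatters_mono hB (by exact_mod_cast hB'sub)
      obtain ⟨A, hA, hAcard⟩ := primal_of_dual hB' hB'card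
      have : ((d + 1 : ℕ) : ℕ∞) ≤ vcDim 𝒞 := hAcard ▸ le_vcDim hA
      rw [hvc] at this
      have : d + 1 ≤ d := by exact_mod_cast this
      omega
    refine lt_of_le_of_lt hle ?_
    have : (2 ^ (d + 1) - 1 : ℕ) < 2 ^ (d + 1) := by
      have := Nat.one_le_two_pow (n := d + 1); omega
    exact_mod_cast this
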